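/- arXiv:2005.05134 — 2 statements merged into one kernel-verified Lean document; each statement's English description precedes it below -/
import Mathlib

section
/- The map κ : OnePoint ℝ → AddCircle 1 defined by κ(x) = k(x) mod ℤ for real x ∉ {0, 1}, and κ(0) = κ(1) = κ(∞) = 0, is continuous on the one-point compactification of ℝ. -/
open OnePoint Filter Topology Set

/-- The piecewise map `k`: `k(x) = 1/(1-x)` for `x < 0`, `k(x) = x` for
`0 < x < 1`, `k(x) = 1 - 1/x` for `x > 1`. -/
noncomputable def k (x : ℝ) : ℝ :=
  if x < 0 then 1 / (1 - x) else if x < 1 then x else 1 - 1 / x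

/-- The map `κ : ℝ₊ = ℙ¹(ℝ) → ℝ/ℤ`, sending a real `x ∉ {0,1}` to `k(x) mod ℤ`
and `0, 1, ∞` to `0`. -/
noncomputable def kappa : OnePoint ℝ → AddCircle (1 : ℝ) :=
  fun p => Option.elim p 0 (fun x => if x = 0 ∨ x = 1 then 0 else (k x : AddCircle (1 : ℝ)))

/-!
The three branches of `k` are continuous on their closed pieces, and at the junctions `0` and `1`
as well as at `∓∞` the one-sided limits of `k` lie in `{0, 1}`, so they all agree modulo `ℤ`.
-/

theorem continuous_if_lt_of_continuousOn {α γ : Type*} [TopologicalSpace α] [LinearOrder α]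
    [OrderClosedTopology α] [TopologicalSpace γ] {a : α} {f g : α → γ}
    (hf : ContinuousOn f (Iic a)) (hg : ContinuousOn g (Ici a)) (hfg : f a = g a) :
    Continuous fun x => if x < a then f x else g x := by
  simp_rw [← not_le, ite_not]
  exact continuous_if_le continuous_const continuous_id hg hf fun x hx => hx ▸ hfg.symm

lemma kappa_coe (x : ℝ) : kappa x = (k x : AddCircle (1 : ℝ)) := by
  change (if x = 0 ∨ x = 1 then 0 else (k x : AddCircle (1 : ℝ))) = _
  split_ifs with hx
  · rcases hx with rfl | rfl <;> norm_num [k]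
  · rfl

lemma continuous_coe_k : Continuous fun x => (k x : AddCircle (1 : ℝ)) := by
  have hmk : Continuous ((↑) : ℝ → AddCircle (1 : ℝ)) := AddCircle.continuous_mk' 1
  simp_rw [k, apply_ite ((↑) : ℝ → AddCircle (1 : ℝ))]
  refine continuous_if_lt_of_continuousOn ?_ (Continuous.continuousOn ?_) ?_
  · exact hmk.comp_continuousOn (continuousOn_const.div (continuousOn_const.sub continuousOn_id)
      fun x (hx : x ≤ 0) => by linarith)
  · refine continuous_if_lt_of_continuousOn hmk.continuousOn ?_ ?_
    · exact hmk.comp_continuousOn (continuousOn_const.sub (continuousOn_const.div continuousOn_id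
        fun x (hx : 1 ≤ x) => by positivity))
    · norm_num
  · norm_num

lemma tendsto_k_atBot : Tendsto k atBot (𝓝 0) := by
  have h : Tendsto (fun x : ℝ => 1 - x) atBot atTop := by
    simpa only [sub_eq_add_neg] using tendsto_atTop_add_const_left atBot 1 tendsto_neg_atBot_atTop
  refine h.inv_tendsto_atTop.congr' ?_
  filter_upwards [eventually_lt_atBot 0] with x hx
  simp [k, hx]

lemma tendsto_k_atTop : Tendsto k atTop (𝓝 1) := by
  have : Tendsto (fun x : ℝ => 1 - 1 / x) atTop (𝓝 1) := by
    simpa using (tendsto_const_nhds (x := (1 : ℝ))).sub tendsto_inv_atTop_zero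
  refine this.congr' ?_
  filter_upwards [eventually_gt_atTop 1] with x hx
  simp [k, (zero_lt_one.trans hx).not_gt, hx.not_gt]

/-- `κ` is continuous on the one-point compactification of `ℝ`. -/
theorem kappa_continuous : Continuous kappa := by
  have hmk : Continuous ((↑) : ℝ → AddCircle (1 : ℝ)) := AddCircle.continuous_mk' 1
  rw [OnePoint.continuous_iff]
  simp only [kappa_coe]
  refine ⟨?_, continuous_coe_k⟩
  change Tendsto _ _ (𝓝 0)
  rw [coclosedCompact_eq_cocompact, cocompact_eq_atBot_atTop, tendsto_sup]
  constructor
  · exact (hmk.tendsto 0).comp tendsto_k_atBot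
  · simpa only [AddCircle.coe_period, Function.comp_def] using (hmk.tendsto 1).comp tendsto_k_atTop
end

section
/- For a real number x, the point ℓ(x) is a root of unity (i.e. ℓ(x)ⁿ = 1 for some positive integer n) if and only if there exists a rational number q with cos(πq) ≠ 0 such that x = tan(πq); thus the torsion subgroup ℚ/ℤ of the circle corresponds under ℓ to the set {tan(πq) : q ∈ ℚ} of cyclotomic algebraic numbers together with ∞. -/
/-!
Every real `x` is `tan θ` with `θ = arctan x ∈ (-π/2, π/2)`, and `ℓ(tan θ) = exp(2iθ)` whenever
`cos θ ≠ 0`, since `1 ± i tan θ = exp(±iθ) / cos θ`. A point `exp(it)` of the circle is a root of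
unity iff `t ∈ 2πℚ`, so `ℓ(x)` is one iff `arctan x ∈ πℚ`.
-/

open Complex OnePoint Real

/-- The map `ℓ : ℝ₊ = ℙ¹(ℝ) → ℂ`, `ℓ(x) = (1 + ix)/(1 - ix)` for real `x`
and `ℓ(∞) = -1`. -/
noncomputable def ell : OnePoint ℝ → ℂ :=
  fun p => Option.elim p (-1) (fun x : ℝ => (1 + I * x) / (1 - I * x))

theorem exp_mul_I_pow_eq_one_iff (n : ℕ) (t : ℝ) :
    exp (t * I) ^ n = 1 ↔ ∃ k : ℤ, n * t = k * (2 * π) := by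
  rw [← Complex.exp_nat_mul, Complex.exp_eq_one_iff]
  refine exists_congr fun k => ⟨fun h => ?_, fun h => ?_⟩
  · simpa using congrArg im h
  · have h' : (n : ℂ) * t = k * (2 * π) := by exact_mod_cast h
    linear_combination I * h'

theorem exists_pow_exp_mul_I_eq_one_iff (t : ℝ) :
    (∃ n : ℕ, 0 < n ∧ exp (t * I) ^ n = 1) ↔ ∃ q : ℚ, t = 2 * π * q := by
  simp only [exp_mul_I_pow_eq_one_iff]
  constructor
  · rintro ⟨n, hn, k, hk⟩
    refine ⟨k / n, ?_⟩
    push_cast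
    field_simp
    linarith
  · rintro ⟨q, rfl⟩
    refine ⟨q.den, q.pos, q.num, ?_⟩
    have : (q.den : ℝ) * q = q.num := by exact_mod_cast Rat.den_mul_eq_num q
    linear_combination 2 * π * this

theorem ell_coe_tan {θ : ℝ} (h : Real.cos θ ≠ 0) :
    ell (Real.tan θ : OnePoint ℝ) = exp (2 * θ * I) := by
  have hc : Complex.cos θ ≠ 0 := by exact_mod_cast h
  have hnum : 1 + I * (Real.tan θ : ℂ) = exp (θ * I) / Complex.cos θ := by
    rw [Real.tan_eq_sin_div_cos, Complex.exp_mul_I]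
    push_cast
    field_simp
  have hden : 1 - I * (Real.tan θ : ℂ) = exp (-θ * I) / Complex.cos θ := by
    rw [Real.tan_eq_sin_div_cos, Complex.exp_mul_I, Complex.cos_neg, Complex.sin_neg]
    push_cast
    field_simp
    ring
  change (1 + I * (Real.tan θ : ℂ)) / (1 - I * Real.tan θ) = _
  rw [hnum, hden, div_div_div_cancel_right₀ hc, ← Complex.exp_sub]
  ring_nf

theorem ell_coe_eq_exp_arctan (x : ℝ) : ell (x : OnePoint ℝ) = exp (2 * Real.arctan x * I) := by
  simpa only [Real.tan_arctan] using ell_coe_tan (cos_arctan_pos x).ne'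

/-- For real `x`, `ℓ(x)` is a root of unity iff `x = tan(πq)` for some
rational `q` with `cos(πq) ≠ 0`: the torsion subgroup `ℚ/ℤ` of the circle
corresponds under `ℓ` to the cyclotomic algebraic numbers `tan(πq)`. -/
theorem ell_root_of_unity_iff_tan_rat (x : ℝ) :
    (∃ n : ℕ, 0 < n ∧ ell ((x : ℝ) : OnePoint ℝ) ^ n = 1) ↔
    (∃ q : ℚ, Real.cos (π * q) ≠ 0 ∧ x = Real.tan (π * q)) := by
  constructor
  · rw [ell_coe_eq_exp_arctan, ← ofReal_ofNat, ← ofReal_mul, exists_pow_exp_mul_I_eq_one_iff]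
    rintro ⟨q, hq⟩
    have harctan : Real.arctan x = π * q := by linarith
    exact ⟨q, harctan ▸ (cos_arctan_pos x).ne', by rw [← harctan, Real.tan_arctan]⟩
  · rintro ⟨q, hcos, rfl⟩
    rw [ell_coe_tan hcos, ← ofReal_ofNat, ← ofReal_mul, exists_pow_exp_mul_I_eq_one_iff]
    exact ⟨q, by ring⟩
end
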